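/- arXiv:2302.07217 — 7 statements merged into one kernel-verified Lean document; each statement's English description precedes it below -/
import Mathlib

section
/- Let G be a graph of diameter D ≥ 2 and let G' satisfy Property R₁ with bijection f, where all edge-bijections of the star product equal f for an arbitrary orientation of edges of G. Then G*G' has diameter at most D+1. -/
open SimpleGraph

/-- `WalkLen adj k x y` : there is a walk of length exactly `k` from `x` to `y`
in the graph with adjacency relation `adj`. -/
def WalkLen {V : Type*} (adj : V → V → Prop) : ℕ → V → V → Prop
  | 0, x, y => x = y
  | (n+1), x, y => ∃ z, adj x z ∧ WalkLen adj n z y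

/-- Adjacency of the star product `G * G'` where every edge-bijection equals the
bijection `f` for the orientation `o` of the edges of `G`: `(x,x') ~ (y,y')` iff
`x = y` and `x' ~ y'` in `G'`, or `(x,y)` is an oriented edge and `y' = f x'`, or
`(y,x)` is an oriented edge and `x' = f y'`. -/
def starAdjOr {α β : Type*} (o : α → α → Prop) (G' : SimpleGraph β) (f : β ≃ β)
    (a b : α × β) : Prop :=
  (a.1 = b.1 ∧ G'.Adj a.2 b.2) ∨ (o a.1 b.1 ∧ b.2 = f a.2) ∨ (o b.1 a.1 ∧ a.2 = f b.2)

lemma WalkLen.nil {V : Type*} {adj : V → V → Prop} {x : V} : WalkLen adj 0 x x := rfl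

lemma WalkLen.cons {V : Type*} {adj : V → V → Prop} {x z y : V} {k : ℕ}
    (h : adj x z) (hw : WalkLen adj k z y) : WalkLen adj (k+1) x y := ⟨z, h, hw⟩

lemma walkLen_one {V : Type*} {adj : V → V → Prop} {x y : V} (h : adj x y) :
    WalkLen adj 1 x y := WalkLen.cons h WalkLen.nil

lemma walkLen_two {V : Type*} {adj : V → V → Prop} {x z y : V} (h1 : adj x z)
    (h2 : adj z y) : WalkLen adj 2 x y := WalkLen.cons h1 (walkLen_one h2)

lemma walkLen_three {V : Type*} {adj : V → V → Prop} {x z w y : V} (h1 : adj x z)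
    (h2 : adj z w) (h3 : adj w y) : WalkLen adj 3 x y :=
  WalkLen.cons h1 (walkLen_two h2 h3)

/-- Property R₁ forces `G'` to have diameter at most 3. -/
lemma dia3 {β : Type*} (G' : SimpleGraph β) (f : β ≃ β)
    (hf2 : ∀ a b : β, G'.Adj a b ↔ G'.Adj (f (f a)) (f (f b)))
    (hR1 : ∀ x y : β, x ≠ y → (G'.Adj x y ∨ G'.Adj (f.symm x) (f.symm y))) :
    ∀ u v : β, ∃ k ≤ 3, WalkLen G'.Adj k u v := by
  -- shift: adjacency of the f.symm-images gives adjacency of the f-images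
  have shift : ∀ a b : β, G'.Adj (f.symm a) (f.symm b) → G'.Adj (f a) (f b) := by
    intro a b h
    have := (hf2 (f.symm a) (f.symm b)).mp h
    simpa using this
  intro u v
  by_cases huv : u = v
  · exact ⟨0, by norm_num, huv ▸ WalkLen.nil⟩
  rcases hR1 u v huv with h | h
  · exact ⟨1, by norm_num, walkLen_one h⟩
  -- h : G'.Adj (f.symm u) (f.symm v)
  have hfufv : G'.Adj (f u) (f v) := shift _ _ h
  rcases eq_or_ne u (f u) with hxu | hxu
  · -- u is a fixed point of f
    have hsu : f.symm u = u := by rw [Equiv.symm_apply_eq]; exact hxu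
    have hufv : G'.Adj u (f v) := hxu ▸ hfufv
    have husv : G'.Adj u (f.symm v) := hsu ▸ h
    rcases eq_or_ne (f v) v with hv | hv
    · exact ⟨1, by norm_num, walkLen_one (hv ▸ hufv)⟩
    rcases hR1 (f v) v hv with h2 | h2
    · exact ⟨2, by norm_num, walkLen_two hufv h2⟩
    · -- h2 : G'.Adj (f.symm (f v)) (f.symm v), i.e. v ~ f.symm v
      have h2' : G'.Adj v (f.symm v) := by simpa using h2
      exact ⟨2, by norm_num, walkLen_two husv h2'.symm⟩
  rcases hR1 u (f u) hxu with h1 | h1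
  · -- G'.Adj u (f u)
    rcases eq_or_ne (f v) v with hv | hv
    · exact ⟨2, by norm_num, walkLen_two h1 (hv ▸ hfufv)⟩
    rcases hR1 (f v) v hv with h2 | h2
    · exact ⟨3, by norm_num, walkLen_three h1 hfufv h2⟩
    · -- h2 : v ~ f.symm v
      have h2' : G'.Adj v (f.symm v) := by simpa using h2
      rcases eq_or_ne u (f.symm v) with he | he
      · -- u = f.symm v, so f u = v
        have : f u = v := by rw [he]; simp
        exact ⟨1, by norm_num, walkLen_one (this ▸ h1)⟩
      rcases hR1 u (f.symm v) he with h3 | h3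
      · exact ⟨2, by norm_num, walkLen_two h3 h2'.symm⟩
      · -- h3 : G'.Adj (f.symm u) (f.symm (f.symm v)); shift gives (f u) ~ v
        have h3' : G'.Adj (f u) v := by simpa using shift _ _ h3
        exact ⟨2, by norm_num, walkLen_two h1 h3'⟩
  · -- h1 : G'.Adj (f.symm u) (f.symm (f u)), i.e. u ~ f.symm u
    have hu' : G'.Adj u (f.symm u) := by
      have : G'.Adj (f.symm u) u := by simpa using h1
      exact this.symm
    rcases eq_or_ne (f v) v with hv | hv
    · -- f v = v hence f.symm v = v
      have hsv : f.symm v = v := by rw [Equiv.symm_apply_eq]; exact hv.symm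
      exact ⟨2, by norm_num, walkLen_two hu' (hsv ▸ h)⟩
    rcases hR1 v (f v) (Ne.symm hv) with h2 | h2
    · -- v ~ f v
      rcases eq_or_ne u (f v) with he | he
      · -- u = f v hence f.symm u = v
        have : f.symm u = v := by rw [he]; simp
        exact ⟨1, by norm_num, walkLen_one (this ▸ hu')⟩
      rcases hR1 u (f v) he with h3 | h3
      · exact ⟨2, by norm_num, walkLen_two h3 h2.symm⟩
      · -- h3 : G'.Adj (f.symm u) (f.symm (f v)) = G'.Adj (f.symm u) v
        have h3' : G'.Adj (f.symm u) v := by simpa using h3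
        exact ⟨2, by norm_num, walkLen_two hu' h3'⟩
    · -- h2 : G'.Adj (f.symm v) (f.symm (f v)) i.e. f.symm v ~ v
      have h2' : G'.Adj (f.symm v) v := by simpa using h2
      exact ⟨3, by norm_num, walkLen_three hu' h h2'⟩

/-- A walk in `G'` lifts to a walk in the fiber over `x`. -/
lemma fiberLift {α β : Type*} (o : α → α → Prop) (G' : SimpleGraph β) (f : β ≃ β)
    (x : α) : ∀ (k : ℕ) (u v : β), WalkLen G'.Adj k u v →
      WalkLen (starAdjOr o G' f) k (x, u) (x, v) := by
  intro k
  induction k with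
  | zero => intro u v h; exact h ▸ WalkLen.nil
  | succ n ih =>
    rintro u v ⟨z, hz, hw⟩
    exact ⟨(x, z), Or.inl ⟨rfl, hz⟩, ih z v hw⟩

/-- Let `G` be a graph of diameter `D ≥ 2` and let `G'` satisfy Property R₁ with
bijection `f` (`f²` is an automorphism of `G'` and `E(G') ∪ f(E(G'))` is the complete
edge set), where all edge-bijections of the star product equal `f` for an arbitrary
orientation `o` of the edges of `G`.  Then `G * G'` has diameter at most `D + 1`. -/
theorem stmt_5 {α β : Type*} [Fintype α] [Fintype β]
    (G : SimpleGraph α) (D : ℕ) (hD : 2 ≤ D)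
    (hconn : G.Connected) (hdiam : ∀ x y : α, G.dist x y ≤ D)
    (o : α → α → Prop)
    (ho : ∀ x y : α, G.Adj x y → ((o x y ∨ o y x) ∧ ¬(o x y ∧ o y x)))
    (ho' : ∀ x y : α, o x y → G.Adj x y)
    (G' : SimpleGraph β) (f : β ≃ β)
    (hf2 : ∀ a b : β, G'.Adj a b ↔ G'.Adj (f (f a)) (f (f b)))
    (hR1 : ∀ x y : β, x ≠ y → (G'.Adj x y ∨ G'.Adj (f.symm x) (f.symm y))) :
    ∀ a b : α × β, ∃ k ≤ D + 1, WalkLen (starAdjOr o G' f) k a b := by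
  set S := starAdjOr o G' f with hS
  have shift : ∀ a b : β, G'.Adj (f.symm a) (f.symm b) → G'.Adj (f a) (f b) := by
    intro a b h
    have := (hf2 (f.symm a) (f.symm b)).mp h
    simpa using this
  -- forward step along an oriented edge
  have stepF : ∀ {x y : α} (_ : o x y) (c : β), S (x, c) (y, f c) :=
    fun hxy c => Or.inr (Or.inl ⟨hxy, rfl⟩)
  have stepB : ∀ {x y : α} (_ : o y x) (c : β), S (x, c) (y, f.symm c) :=
    fun hxy c => Or.inr (Or.inr ⟨hxy, by simp⟩)
  -- lifting a nonempty walk in G with a correction step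
  have liftB : ∀ (x y : α) (p : G.Walk x y), p.length ≠ 0 → ∀ x' y' : β,
      ∃ k ≤ p.length + 1, WalkLen S k (x, x') (y, y') := by
    intro x y p
    induction p with
    | nil => intro h; exact absurd rfl h
    | @cons u v w hadj q ih =>
      intro _ x' y'
      by_cases hq : q.length = 0
      · -- single edge u ~ w (since v = w)
        have hvw : v = w := SimpleGraph.Walk.eq_of_length_eq_zero hq
        subst hvw
        rcases (ho u v hadj).1 with huv | hvu
        · -- oriented u → v
          rcases eq_or_ne (f x') y' with he | he
          · exact ⟨1, by omega, he ▸ walkLen_one (stepF huv x')⟩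
          rcases hR1 (f x') y' he with h | h
          · exact ⟨2, by omega, walkLen_two (stepF huv x')
              (show S (v, f x') (v, y') from Or.inl ⟨rfl, h⟩)⟩
          · have h' : G'.Adj x' (f.symm y') := by simpa using h
            have hlast : S (u, f.symm y') (v, y') := by
              have := stepF huv (f.symm y')
              simpa using this
            exact ⟨2, by omega, walkLen_two
              (show S (u, x') (u, f.symm y') from Or.inl ⟨rfl, h'⟩) hlast⟩
        · -- oriented v → u
          rcases eq_or_ne (f.symm x') y' with he | he
          · exact ⟨1, by omega, he ▸ walkLen_one (stepB hvu x')⟩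
          rcases hR1 (f.symm x') y' he with h | h
          · exact ⟨2, by omega, walkLen_two (stepB hvu x')
              (show S (v, f.symm x') (v, y') from Or.inl ⟨rfl, h⟩)⟩
          · have h' : G'.Adj x' (f y') := by simpa using shift _ _ h
            have hlast : S (u, f y') (v, y') := by
              have := stepB hvu (f y')
              simpa using this
            exact ⟨2, by omega, walkLen_two
              (show S (u, x') (u, f y') from Or.inl ⟨rfl, h'⟩) hlast⟩
      · -- take the first step, then use the inductive hypothesis
        rcases (ho u v hadj).1 with huv | hvu
        · obtain ⟨k, hk, hw⟩ := ih hq (f x') y'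
          exact ⟨k + 1, by simp only [SimpleGraph.Walk.length_cons]; omega,
            WalkLen.cons (stepF huv x') hw⟩
        · obtain ⟨k, hk, hw⟩ := ih hq (f.symm x') y'
          exact ⟨k + 1, by simp only [SimpleGraph.Walk.length_cons]; omega,
            WalkLen.cons (stepB hvu x') hw⟩
  rintro ⟨x, x'⟩ ⟨y, y'⟩
  by_cases hxy : x = y
  · subst hxy
    by_cases hz : ∃ z, G.Adj x z
    · obtain ⟨z, hz⟩ := hz
      obtain ⟨k, hk, hw⟩ := liftB x x
        (SimpleGraph.Walk.cons hz (SimpleGraph.Walk.cons hz.symm SimpleGraph.Walk.nil))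
        (by simp) x' y'
      simp only [SimpleGraph.Walk.length_cons, SimpleGraph.Walk.length_nil] at hk
      exact ⟨k, by omega, hw⟩
    · -- x is isolated, hence walk within the fiber
      obtain ⟨k, hk, hw⟩ := dia3 G' f hf2 hR1 x' y'
      exact ⟨k, by omega, fiberLift o G' f x k x' y' hw⟩
  · obtain ⟨p, hp⟩ := hconn.exists_walk_length_eq_dist x y
    have hne : p.length ≠ 0 := by
      intro h0
      exact hxy (SimpleGraph.Walk.eq_of_length_eq_zero h0)
    obtain ⟨k, hk, hw⟩ := liftB x y p hne x' y'
    have : p.length ≤ D := hp ▸ hdiam x y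
    exact ⟨k, by omega, hw⟩
end

section
/- The Erdős–Rényi polarity graph ER_q has diameter 2: for any two distinct projective points v, w over F_q, there exists a projective point orthogonal to both. -/
open Matrix

/-! The cross product of representatives of two distinct points is nonzero, since the
representatives are linearly independent, and it is orthogonal to both of them. -/

namespace Projectivization

theorem mk_rep_dotProduct_eq_zero_iff {K ι : Type*} [DivisionRing K] [Fintype ι]
    (x y : ι → K) (hx : x ≠ 0) :
    (mk K x hx).rep ⬝ᵥ y = 0 ↔ x ⬝ᵥ y = 0 := by
  obtain ⟨a, ha⟩ := exists_smul_eq_mk_rep K x hx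
  rw [← ha, Units.smul_def, smul_dotProduct, smul_eq_zero_iff_right a.ne_zero]

end Projectivization

theorem stmt_6_general {F : Type*} [Field F]
    (v w : Projectivization F (Fin 3 → F)) (hvw : v ≠ w) :
    ∃ u : Projectivization F (Fin 3 → F),
      dotProduct u.rep v.rep = 0 ∧ dotProduct u.rep w.rep = 0 := by
  have hcross : v.rep ⨯₃ w.rep ≠ 0 :=
    crossProduct_ne_zero_iff_linearIndependent.2
      (Projectivization.linearIndependent_pair_iff_ne.2 hvw)
  refine ⟨Projectivization.mk F _ hcross, ?_, ?_⟩
  · rw [Projectivization.mk_rep_dotProduct_eq_zero_iff, dotProduct_comm, dot_self_cross]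
  · rw [Projectivization.mk_rep_dotProduct_eq_zero_iff, dotProduct_comm, dot_cross_self]

/-- The Erdős–Rényi polarity graph `ER_q` has diameter 2: for any two distinct points
of the projective plane `PG(2,q)` over a finite field `F` of order `q`, there exists a
projective point orthogonal to both (orthogonality of projective points being computed
on representative vectors via the dot product). -/
theorem stmt_6 {F : Type*} [Field F] [Fintype F]
    (v w : Projectivization F (Fin 3 → F)) (hvw : v ≠ w) :
    ∃ u : Projectivization F (Fin 3 → F),
      dotProduct u.rep v.rep = 0 ∧ dotProduct u.rep w.rep = 0 :=
  stmt_6_general v w hvw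
end

section
/- If G' has maximum degree d' and 2d'+2 vertices and satisfies Property R* with involution f, then for every vertex x the sets {x}, {f(x)}, f(N(x)) and N(f(x)) are pairwise disjoint, and their union is V(G'). -/
open SimpleGraph

/-- Property R*: `E(G') ∪ f(E(G')) ∪ {(x', f x') : x' ∈ V(G')}` is the edge set of
the complete graph on `V(G')`. -/
def PropertyRStar {β : Type*} (G' : SimpleGraph β) (f : β → β) : Prop :=
  ∀ x y : β, x ≠ y → (G'.Adj x y ∨ G'.Adj (f x) (f y) ∨ y = f x)

lemma stmt_9_aux {β : Type*} [Fintype β] (A B C D : Set β)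
    (h : ∀ y : β, y ∈ A ∨ y ∈ B ∨ y ∈ C ∨ y ∈ D)
    (hs : A.ncard + B.ncard + C.ncard + D.ncard ≤ Fintype.card β) :
    Disjoint A B := by
  rw [Set.disjoint_iff_inter_eq_empty]
  by_contra hne
  have hABne : (A ∩ B).Nonempty := Set.nonempty_iff_ne_empty.2 hne
  have h1 : 1 ≤ (A ∩ B).ncard := (Set.ncard_pos (A ∩ B).toFinite).2 hABne
  have hU : (Set.univ : Set β) ⊆ A ∪ B ∪ C ∪ D := by
    intro y _
    have := h y
    simp only [Set.mem_union]
    tauto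
  have hcard : Fintype.card β ≤ (A ∪ B ∪ C ∪ D).ncard := by
    calc Fintype.card β = (Set.univ : Set β).ncard := by
          simp [Set.ncard_univ]
      _ ≤ _ := Set.ncard_le_ncard hU (Set.toFinite _)
  have e1 : (A ∪ B).ncard + (A ∩ B).ncard = A.ncard + B.ncard :=
    Set.ncard_union_add_ncard_inter A B
  have i1 : (A ∪ B ∪ C ∪ D).ncard ≤ (A ∪ B ∪ C).ncard + D.ncard :=
    Set.ncard_union_le _ _
  have i2 : (A ∪ B ∪ C).ncard ≤ (A ∪ B).ncard + C.ncard :=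
    Set.ncard_union_le _ _
  omega

/-- If `G'` has maximum degree `d'` and `2d' + 2` vertices and satisfies Property R*
with involution `f`, then for every vertex `x` the sets `{x}`, `{f x}`, `f(N(x))` and
`N(f x)` are pairwise disjoint and their union is `V(G')`. -/
theorem stmt_9 {β : Type*} [Fintype β] (G' : SimpleGraph β) (f : β → β)
    (hf : Function.Involutive f) (hR : PropertyRStar G' f) (d' : ℕ)
    (hdeg : ∀ v : β, (G'.neighborSet v).ncard ≤ d')
    (hcard : Fintype.card β = 2 * d' + 2) :
    ∀ x : β,
      [({x} : Set β), {f x}, f '' G'.neighborSet x,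
        G'.neighborSet (f x)].Pairwise Disjoint ∧
      ({x} : Set β) ∪ {f x} ∪ (f '' G'.neighborSet x) ∪ G'.neighborSet (f x) =
        Set.univ := by
  intro x
  set A : Set β := {x}
  set B : Set β := {f x}
  set C : Set β := f '' G'.neighborSet x
  set D : Set β := G'.neighborSet (f x)
  have hmem : ∀ y : β, y ∈ A ∨ y ∈ B ∨ y ∈ C ∨ y ∈ D := by
    intro y
    by_cases h1 : y = x
    · exact Or.inl h1
    by_cases h2 : y = f x
    · exact Or.inr (Or.inl h2)
    · rcases hR (f x) y (fun h => h2 h.symm) with h | h | h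
      · exact Or.inr (Or.inr (Or.inr h))
      · refine Or.inr (Or.inr (Or.inl ⟨f y, ?_, hf y⟩))
        rwa [hf x] at h
      · exact absurd (h.trans (hf x)) h1
  have hA : A.ncard = 1 := Set.ncard_singleton x
  have hB : B.ncard = 1 := Set.ncard_singleton (f x)
  have hC : C.ncard ≤ d' :=
    le_trans (Set.ncard_image_le (Set.toFinite _)) (hdeg x)
  have hD : D.ncard ≤ d' := hdeg (f x)
  have hs : A.ncard + B.ncard + C.ncard + D.ncard ≤ Fintype.card β := by omega
  constructor
  · have dAB : Disjoint A B := stmt_9_aux A B C D hmem hs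
    have dAC : Disjoint A C := stmt_9_aux A C B D (fun y => by have := hmem y; tauto) (by omega)
    have dAD : Disjoint A D := stmt_9_aux A D B C (fun y => by have := hmem y; tauto) (by omega)
    have dBC : Disjoint B C := stmt_9_aux B C A D (fun y => by have := hmem y; tauto) (by omega)
    have dBD : Disjoint B D := stmt_9_aux B D A C (fun y => by have := hmem y; tauto) (by omega)
    have dCD : Disjoint C D := stmt_9_aux C D A B (fun y => by have := hmem y; tauto) (by omega)
    refine .cons ?_ (.cons ?_ (.cons ?_ (.cons ?_ .nil))) <;>
      intro s hs' <;> simp only [List.mem_cons, List.not_mem_nil, or_false,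
        List.mem_singleton] at hs'
    · rcases hs' with rfl | rfl | rfl
      exacts [dAB, dAC, dAD]
    · rcases hs' with rfl | rfl
      exacts [dBC, dBD]
    · rcases hs' with rfl
      exact dCD
  · ext y
    simp only [Set.mem_union, Set.mem_univ, iff_true]
    have := hmem y
    tauto
end

section
/- Let G' have degree d' and 2d'+2 vertices and satisfy Property R* with involution f. For any vertex x, let X be the set of f-pairs {y, f(y)} both of whose elements are neighbors of x, and X_f the set of f-pairs both of whose elements are neighbors of f(x). Then X and X_f are disjoint and have the same cardinality. -/
/-!
Write `P v` for the set of `y` with both `y` and `f y` adjacent to `v`; it is a union of `f`-pairs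
and `X` is its set of pairs, so `|P x| = 2 |X|`. The sets `N(v)` and `f⁻¹ N(v)` have `d'`
elements each among `2d' + 2`, so by inclusion–exclusion exactly `|P v| + 2` vertices lie in
neither. Property R* puts each of them other than `x` and `f x` into `P (f x)`, whence
`|P x| ≤ |P (f x)|`, and equality by symmetry. Comparing cardinalities, the vertices in neither
are then exactly `P (f x) ∪ {x, f x}`, so `P (f x)` misses `N(x)` and hence `P x`.
-/

open SimpleGraph

theorem Set.ncard_compl_union_add_ncard_add_ncard {α : Type*} [Finite α] (s t : Set α) :
    (s ∪ t)ᶜ.ncard + s.ncard + t.ncard = Nat.card α + (s ∩ t).ncard := by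
  have := ncard_union_add_ncard_inter s t
  have := ncard_add_ncard_compl (s ∪ t)
  omega

theorem Set.ncard_pair_le {α : Type*} (a b : α) : ({a, b} : Set α).ncard ≤ 2 :=
  (ncard_insert_le a {b}).trans (by rw [ncard_singleton])

namespace Function.Involutive

variable {α : Type*} {f : α → α}

theorem sym2_mk_eq_sym2_mk_iff (hf : f.Involutive) {a b : α} :
    s(a, f a) = s(b, f b) ↔ a = b ∨ a = f b := by
  rw [Sym2.eq_iff]
  constructor
  · rintro (⟨rfl, -⟩ | ⟨rfl, -⟩) <;> simp
  · rintro (rfl | rfl)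
    · exact .inl ⟨rfl, rfl⟩
    · exact .inr ⟨rfl, hf b⟩

theorem ncard_eq_two_mul_ncard_image_sym2_mk (hf : f.Involutive) (hfp : ∀ a, f a ≠ a)
    {S : Set α} (hS : Set.MapsTo f S S) (hSfin : S.Finite := by toFinite_tac) :
    S.ncard = 2 * ((fun a => s(a, f a)) '' S).ncard := by
  classical
  obtain ⟨s, rfl⟩ := hSfin.exists_finset_coe
  rw [← Finset.coe_image, Set.ncard_coe_finset, Set.ncard_coe_finset,
    Finset.card_eq_sum_card_image (fun a => s(a, f a)), mul_comm]
  refine Finset.sum_const_nat fun p hp => ?_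
  obtain ⟨b, hb, rfl⟩ := Finset.mem_image.mp hp
  have hfiber : {a ∈ s | s(a, f a) = s(b, f b)} = {b, f b} := by
    ext a
    simp only [Finset.mem_filter, hf.sym2_mk_eq_sym2_mk_iff, Finset.mem_insert,
      Finset.mem_singleton]
    constructor
    · exact And.right
    · rintro (rfl | rfl)
      · exact ⟨hb, .inl rfl⟩
      · exact ⟨hS hb, .inr rfl⟩
  rw [hfiber, Finset.card_pair (hfp b).symm]

theorem disjoint_image_sym2_mk (hf : f.Involutive) {S T : Set α} (hT : Set.MapsTo f T T)
    (hST : Disjoint S T) :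
    Disjoint ((fun a => s(a, f a)) '' S) ((fun a => s(a, f a)) '' T) := by
  rw [Set.disjoint_left]
  rintro _ ⟨a, ha, rfl⟩ ⟨b, hb, hba⟩
  refine Set.disjoint_left.mp hST ha ?_
  rcases hf.sym2_mk_eq_sym2_mk_iff.mp hba with rfl | rfl
  exacts [hb, hf a ▸ hT hb]

end Function.Involutive

namespace SimpleGraph

variable {β : Type*} {G' : SimpleGraph β} {f : β → β}

def pairedNeighborSet (G' : SimpleGraph β) (f : β → β) (v : β) : Set β :=
  G'.neighborSet v ∩ f ⁻¹' G'.neighborSet v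

theorem mapsTo_pairedNeighborSet (hf : f.Involutive) (v : β) :
    Set.MapsTo f (G'.pairedNeighborSet f v) (G'.pairedNeighborSet f v) :=
  fun y ⟨hy, hfy⟩ => ⟨hfy, by simpa only [Set.mem_preimage, hf y] using hy⟩

theorem image_sym2_mk_pairedNeighborSet (v : β) :
    (fun y => s(y, f y)) '' G'.pairedNeighborSet f v =
      {p | ∃ y, p = s(y, f y) ∧ G'.Adj v y ∧ G'.Adj v (f y)} := by
  ext p
  simp only [pairedNeighborSet, Set.mem_image, Set.mem_inter_iff, Set.mem_preimage,
    mem_neighborSet, Set.mem_ofPred_eq]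
  constructor
  · rintro ⟨y, hy, rfl⟩; exact ⟨y, rfl, hy⟩
  · rintro ⟨y, rfl, hy⟩; exact ⟨y, hy, rfl⟩

theorem compl_union_preimage_neighborSet_subset (hf : f.Involutive) (hR : PropertyRStar G' f)
    (x : β) :
    (G'.neighborSet x ∪ f ⁻¹' G'.neighborSet x)ᶜ ⊆
      G'.pairedNeighborSet f (f x) ∪ {x, f x} := by
  intro y hy
  simp only [Set.compl_union, Set.mem_inter_iff, Set.mem_compl_iff, Set.mem_preimage,
    mem_neighborSet] at hy
  obtain ⟨hxy, hxfy⟩ := hy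
  by_cases hyx : y = x
  · exact .inr (.inl hyx)
  by_cases hyfx : y = f x
  · exact .inr (.inr hyfx)
  refine .inl ⟨?_, ?_⟩
  · have hfyx : f y ≠ x := fun h => hyfx (by rw [← h, hf y])
    simpa [hxfy, hf y, hf.injective.eq_iff, hyx] using hR x (f y) (Ne.symm hfyx)
  · simpa [hxy, hyfx] using hR x y (Ne.symm hyx)

variable [Fintype β] {d' : ℕ}

theorem ncard_compl_union_preimage_neighborSet (hf : f.Involutive)
    (hreg : ∀ v : β, (G'.neighborSet v).ncard = d') (hcard : Fintype.card β = 2 * d' + 2)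
    (v : β) :
    (G'.neighborSet v ∪ f ⁻¹' G'.neighborSet v)ᶜ.ncard =
      (G'.pairedNeighborSet f v).ncard + 2 := by
  have hpre : (f ⁻¹' G'.neighborSet v).ncard = d' := by
    rw [Set.ncard_preimage_of_injective_subset_range hf.injective
      (by simp [hf.surjective.range_eq]), hreg]
  have := Set.ncard_compl_union_add_ncard_add_ncard (G'.neighborSet v) (f ⁻¹' G'.neighborSet v)
  rw [hpre, hreg, Nat.card_eq_fintype_card, hcard] at this
  rw [pairedNeighborSet]
  omega

theorem ncard_pairedNeighborSet_add_two_le (hf : f.Involutive) (hR : PropertyRStar G' f)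
    (hreg : ∀ v : β, (G'.neighborSet v).ncard = d') (hcard : Fintype.card β = 2 * d' + 2)
    (x : β) :
    (G'.pairedNeighborSet f x).ncard + 2 ≤ (G'.pairedNeighborSet f (f x) ∪ {x, f x}).ncard := by
  rw [← ncard_compl_union_preimage_neighborSet hf hreg hcard]
  exact Set.ncard_le_ncard (compl_union_preimage_neighborSet_subset hf hR x)

theorem ncard_pairedNeighborSet_le (hf : f.Involutive) (hR : PropertyRStar G' f)
    (hreg : ∀ v : β, (G'.neighborSet v).ncard = d') (hcard : Fintype.card β = 2 * d' + 2)
    (x : β) :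
    (G'.pairedNeighborSet f x).ncard ≤ (G'.pairedNeighborSet f (f x)).ncard := by
  have := Set.ncard_pair_le x (f x)
  have := ncard_pairedNeighborSet_add_two_le hf hR hreg hcard x
  have := Set.ncard_union_le (G'.pairedNeighborSet f (f x)) {x, f x}
  omega

theorem ncard_pairedNeighborSet_apply (hf : f.Involutive) (hR : PropertyRStar G' f)
    (hreg : ∀ v : β, (G'.neighborSet v).ncard = d') (hcard : Fintype.card β = 2 * d' + 2)
    (x : β) :
    (G'.pairedNeighborSet f (f x)).ncard = (G'.pairedNeighborSet f x).ncard := by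
  have := ncard_pairedNeighborSet_le hf hR hreg hcard (f x)
  rw [hf x] at this
  exact this.antisymm (ncard_pairedNeighborSet_le hf hR hreg hcard x)

theorem disjoint_pairedNeighborSet_apply (hf : f.Involutive) (hR : PropertyRStar G' f)
    (hreg : ∀ v : β, (G'.neighborSet v).ncard = d') (hcard : Fintype.card β = 2 * d' + 2)
    (x : β) :
    Disjoint (G'.pairedNeighborSet f x) (G'.pairedNeighborSet f (f x)) := by
  have hsubset := compl_union_preimage_neighborSet_subset hf hR x
  have hle : (G'.pairedNeighborSet f (f x) ∪ {x, f x}).ncard ≤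
      (G'.neighborSet x ∪ f ⁻¹' G'.neighborSet x)ᶜ.ncard := by
    rw [ncard_compl_union_preimage_neighborSet hf hreg hcard x,
      ← ncard_pairedNeighborSet_apply hf hR hreg hcard x]
    exact (Set.ncard_union_le _ _).trans (Nat.add_le_add_left (Set.ncard_pair_le x (f x)) _)
  have hpaired_subset : G'.pairedNeighborSet f (f x) ⊆ (G'.neighborSet x)ᶜ :=
    calc G'.pairedNeighborSet f (f x)
        ⊆ G'.pairedNeighborSet f (f x) ∪ {x, f x} := Set.subset_union_left
      _ = (G'.neighborSet x ∪ f ⁻¹' G'.neighborSet x)ᶜ :=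
        (Set.eq_of_subset_of_ncard_le hsubset hle).symm
      _ ⊆ (G'.neighborSet x)ᶜ := Set.compl_subset_compl.mpr Set.subset_union_left
  exact disjoint_compl_right.mono Set.inter_subset_left hpaired_subset

end SimpleGraph

/-- Let `G'` be `d'`-regular with `2d' + 2` vertices, satisfying Property R* with a
fixed-point-free involution `f`.  For any vertex `x`, let `X` be the set of `f`-pairs
`{y, f y}` both of whose elements are neighbors of `x`, and `X_f` the set of `f`-pairs
both of whose elements are neighbors of `f x`.  Then `X` and `X_f` are disjoint and
have the same cardinality. -/
theorem stmt_10 {β : Type*} [Fintype β] (G' : SimpleGraph β) (f : β → β)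
    (hf : Function.Involutive f) (hfp : ∀ v : β, f v ≠ v)
    (hR : PropertyRStar G' f) (d' : ℕ)
    (hreg : ∀ v : β, (G'.neighborSet v).ncard = d')
    (hcard : Fintype.card β = 2 * d' + 2) (x : β) :
    Disjoint {p : Sym2 β | ∃ y, p = s(y, f y) ∧ G'.Adj x y ∧ G'.Adj x (f y)}
        {p : Sym2 β | ∃ y, p = s(y, f y) ∧ G'.Adj (f x) y ∧ G'.Adj (f x) (f y)} ∧
      {p : Sym2 β | ∃ y, p = s(y, f y) ∧ G'.Adj x y ∧ G'.Adj x (f y)}.ncard =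
        {p : Sym2 β | ∃ y, p = s(y, f y) ∧ G'.Adj (f x) y ∧ G'.Adj (f x) (f y)}.ncard := by
  simp only [← image_sym2_mk_pairedNeighborSet]
  refine ⟨hf.disjoint_image_sym2_mk (mapsTo_pairedNeighborSet hf (f x))
    (disjoint_pairedNeighborSet_apply hf hR hreg hcard x), ?_⟩
  have hx := hf.ncard_eq_two_mul_ncard_image_sym2_mk hfp (G'.mapsTo_pairedNeighborSet hf x)
  have hfx := hf.ncard_eq_two_mul_ncard_image_sym2_mk hfp (G'.mapsTo_pairedNeighborSet hf (f x))
  have := ncard_pairedNeighborSet_apply hf hR hreg hcard x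
  omega
end

section
/- For every non-negative integer n, there exists a graph of degree d' = 4n satisfying Property R* with exactly 2d'+2 vertices, constructed inductively from the degree-0 base graph (two isolated vertices) by repeatedly adding 8 vertices and increasing the degree by 4. -/
/-!
Take the vertices `ZMod (4n+1) × Bool` and let `f` swap the two layers. Inside the layers put
circulant graphs with jumps `±[1, n]` and `±[n+1, 2n]` respectively: together they join every
pair lying in one layer. Between the layers put the rotational tournament, `(a, false) ~ (c, true)`
iff `c - a ∈ [1, 2n]`: as exactly one of `d, -d` lies in `[1, 2n]` for `d ≠ 0`, every pair from
different layers other than `{x, f x}` is an edge or is mapped to an edge by `f`. Each vertex has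
`2n` neighbours in its own layer and `2n` in the other.
-/

open SimpleGraph

open Finset

namespace SimpleGraph

variable {Γ ι : Type*} [AddGroup Γ]

def multiCayley (D : ι → ι → Set Γ) (hD : ∀ i j, D j i = -D i j) (h0 : ∀ i, 0 ∉ D i i) :
    SimpleGraph (Γ × ι) where
  Adj x y := -x.1 + y.1 ∈ D x.2 y.2
  symm := ⟨fun x y h => by rwa [hD, Set.mem_neg, neg_add_rev, neg_neg]⟩
  loopless := ⟨fun x h => h0 x.2 (by simpa using h)⟩

variable {D : ι → ι → Set Γ} {hD : ∀ i j, D j i = -D i j} {h0 : ∀ i, 0 ∉ D i i}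

theorem multiCayley_adj {x y : Γ × ι} :
    (multiCayley D hD h0).Adj x y ↔ -x.1 + y.1 ∈ D x.2 y.2 := Iff.rfl

theorem ncard_neighborSet_multiCayley [Finite Γ] [Fintype ι] (v : Γ × ι) :
    ((multiCayley D hD h0).neighborSet v).ncard = ∑ j, (D v.2 j).ncard := by
  let e : (multiCayley D hD h0).neighborSet v ≃ Σ j, D v.2 j :=
    { toFun := fun y => ⟨y.1.2, -v.1 + y.1.1, y.2⟩
      invFun := fun d => ⟨(v.1 + d.2, d.1), by simp [multiCayley_adj]⟩
      left_inv := fun y => by simp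
      right_inv := fun d => by simp }
  simp_rw [← Nat.card_coe_set_eq, Nat.card_congr e, Nat.card_sigma]

theorem propertyRStar_multiCayley {D : Bool → Bool → Set Γ} {hD : ∀ i j, D j i = -D i j}
    {h0 : ∀ i, 0 ∉ D i i} (hcover : ∀ d ≠ 0, ∀ b b', d ∈ D b b' ∨ d ∈ D (!b) (!b')) :
    PropertyRStar (multiCayley D hD h0) (fun x => (x.1, !x.2)) := by
  rintro ⟨a, b⟩ ⟨c, b'⟩ hne
  by_cases hac : a = c
  · subst hac
    have hb : b' = !b := by
      rw [Bool.eq_not_iff]; exact fun h => hne (by rw [h])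
    simp [hb]
  · exact (hcover (-a + c) (by simpa [neg_add_eq_zero] using hac) b b').imp_right Or.inl

end SimpleGraph

section

theorem ZMod.ncard_setOf_val_mem {m : ℕ} [NeZero m] {s : Finset ℕ} (hs : ∀ k ∈ s, k < m) :
    {d : ZMod m | d.val ∈ s}.ncard = s.card := by
  change (ZMod.val ⁻¹' (s : Set ℕ)).ncard = _
  rw [Set.ncard_preimage_of_injective_subset_range (ZMod.val_injective m), Set.ncard_coe_finset]
  exact fun k hk => ⟨k, ZMod.val_cast_of_lt (hs k hk)⟩

-- Jumps as residues in `[0, 4n]`: e.g. `Icc (3 * n + 1) (4 * n)` is `-[1, n]`.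
def rStarJumps (n : ℕ) : Bool → Bool → Finset ℕ
  | true, true => Icc 1 n ∪ Icc (3 * n + 1) (4 * n)
  | false, false => Icc (n + 1) (3 * n)
  | false, true => Icc 1 (2 * n)
  | true, false => Icc (2 * n + 1) (4 * n)

def rStarConnection (n : ℕ) (b b' : Bool) : Set (ZMod (4 * n + 1)) :=
  {d | d.val ∈ rStarJumps n b b'}

variable {n : ℕ}

theorem rStarConnection_swap (b b' : Bool) :
    rStarConnection n b' b = -rStarConnection n b b' := by
  ext d
  have hlt := ZMod.val_lt d
  rcases eq_or_ne d 0 with rfl | hd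
  · cases b <;> cases b' <;> simp [rStarConnection, rStarJumps]
  · cases b <;> cases b' <;>
      simp only [rStarConnection, rStarJumps, Set.mem_ofPred_eq, Set.mem_neg, ZMod.neg_val, hd,
        if_false, mem_union, mem_Icc] <;> omega

theorem zero_notMem_rStarConnection (b : Bool) : 0 ∉ rStarConnection n b b := by
  cases b <;> simp [rStarConnection, rStarJumps]

theorem rStarConnection_cover {d : ZMod (4 * n + 1)} (hd : d ≠ 0) (b b' : Bool) :
    d ∈ rStarConnection n b b' ∨ d ∈ rStarConnection n (!b) (!b') := by
  have hlt := ZMod.val_lt d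
  have hpos : d.val ≠ 0 := (ZMod.val_ne_zero d).mpr hd
  cases b <;> cases b' <;>
    simp only [rStarConnection, rStarJumps, Set.mem_ofPred_eq, Bool.not_true, Bool.not_false,
      mem_union, mem_Icc] <;> omega

theorem ncard_rStarConnection (b b' : Bool) : (rStarConnection n b b').ncard = 2 * n := by
  rw [rStarConnection, ZMod.ncard_setOf_val_mem]
  · cases b <;> cases b'
    case true.true =>
      have hdisj : Disjoint (Icc 1 n) (Icc (3 * n + 1) (4 * n)) :=
        disjoint_left.mpr fun k hk hk' => by simp only [mem_Icc] at hk hk'; omega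
      rw [rStarJumps, card_union_of_disjoint hdisj, Nat.card_Icc, Nat.card_Icc]
      omega
    all_goals rw [rStarJumps, Nat.card_Icc]; omega
  · intro k hk
    cases b <;> cases b' <;> simp only [rStarJumps, mem_union, mem_Icc] at hk <;> omega

end

/-- For every non-negative integer `n`, there exists a graph of degree `d' = 4n`
satisfying Property R* (with respect to an involution) with exactly `2d' + 2`
vertices. -/
theorem stmt_11 (n : ℕ) :
    ∃ (β : Type) (_ : Fintype β) (G' : SimpleGraph β) (f : β → β),
      Function.Involutive f ∧ PropertyRStar G' f ∧
      Fintype.card β = 2 * (4 * n) + 2 ∧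
      ∀ v : β, (G'.neighborSet v).ncard = 4 * n := by
  refine ⟨ZMod (4 * n + 1) × Bool, inferInstance,
    multiCayley (rStarConnection n) rStarConnection_swap zero_notMem_rStarConnection,
    fun x => (x.1, !x.2), fun x => by simp,
    propertyRStar_multiCayley fun _ hd => rStarConnection_cover hd, ?_, fun v => ?_⟩
  · rw [Fintype.card_prod, ZMod.card, Fintype.card_bool]
    ring
  · rw [ncard_neighborSet_multiCayley, Fintype.sum_bool, ncard_rStarConnection,
      ncard_rStarConnection]
    ring
end

section
/- The degree-3 graph G'_3 on 8 vertices {x, f(x), y, f(y), z, f(z), w, f(w)}, where f(y), f(z), f(w) are adjacent to {z,f(z)}, {w,f(w)}, {y,f(y)} respectively and both x and f(x) are adjacent to y, z, w, satisfies Property R*: for every vertex v, V(G'_3) = {v} ∪ {f(v)} ∪ N(f(v)) ∪ f(N(v)). -/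
open SimpleGraph

/-- The degree-3 base graph `G'₃` on the 8 vertices
`0 = x, 1 = f x, 2 = y, 3 = f y, 4 = z, 5 = f z, 6 = w, 7 = f w`:
`f y`, `f z`, `f w` are adjacent to `{z, f z}`, `{w, f w}`, `{y, f y}` respectively,
and both `x` and `f x` are adjacent to `y`, `z`, `w`. -/
def G3 : SimpleGraph (Fin 8) :=
  SimpleGraph.fromRel (fun a b =>
    (a, b) ∈ [((3 : Fin 8), (4 : Fin 8)), (3, 5), (5, 6), (5, 7), (7, 2), (7, 3),
      (0, 2), (0, 4), (0, 6), (1, 2), (1, 4), (1, 6)])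

/-- The involution swapping each pair `(x, f x)`, `(y, f y)`, `(z, f z)`, `(w, f w)`. -/
def f3 : Fin 8 → Fin 8 := ![1, 0, 3, 2, 5, 4, 7, 6]

instance decidableAdjG3 : DecidableRel G3.Adj := fun a b => by
  unfold G3; infer_instance

lemma eq_or_eq_f3_or_adj_f3_or_f3_adj (v u : Fin 8) :
    u = v ∨ u = f3 v ∨ G3.Adj (f3 v) u ∨ ∃ x, G3.Adj v x ∧ f3 x = u := by
  revert v u
  decide

/-- The degree-3 graph `G'₃` satisfies Property R* via the characterization: for every
vertex `v`, `V(G'₃) = {v} ∪ {f v} ∪ N(f v) ∪ f(N(v))`. -/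
theorem stmt_12 :
    ∀ v : Fin 8, (Set.univ : Set (Fin 8)) =
      {v} ∪ {f3 v} ∪ G3.neighborSet (f3 v) ∪ (f3 '' G3.neighborSet v) := by
  intro v
  refine (Set.eq_univ_of_forall fun u => ?_).symm
  simpa only [Set.mem_union, Set.mem_singleton_iff, mem_neighborSet, Set.mem_image,
    or_assoc] using eq_or_eq_f3_or_adj_f3_or_f3_adj v u
end

section
/- A d'-regular graph with 2d'+2 vertices satisfying Property R* can exist only if d' ≡ 0 or 3 (mod 4). -/
open SimpleGraph

open Finset

lemma even_sum_invol {β : Type*} [DecidableEq β] (f : β → β) (g : β → ℕ) :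
    ∀ (s : Finset β), (∀ x ∈ s, f x ∈ s) → (∀ x ∈ s, f (f x) = x) →
      (∀ x ∈ s, f x ≠ x) → (∀ x ∈ s, g (f x) = g x) → Even (∑ x ∈ s, g x) := by
  intro s
  induction s using Finset.strongInduction with
  | _ s ih =>
    intro hcl hinv hfp hg
    rcases s.eq_empty_or_nonempty with rfl | ⟨x, hx⟩
    · simp
    · have hfx : f x ∈ s := hcl x hx
      have hne : f x ≠ x := hfp x hx
      set s' : Finset β := (s.erase x).erase (f x) with hs'
      have hsub : s' ⊆ s := (Finset.erase_subset _ _).trans (Finset.erase_subset _ _)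
      have hmem : ∀ z, z ∈ s' ↔ z ∈ s ∧ z ≠ x ∧ z ≠ f x := by
        intro z
        simp only [hs', Finset.mem_erase]
        tauto
      have hss : s' ⊂ s := by
        refine (Finset.ssubset_iff_of_subset hsub).mpr ⟨x, hx, ?_⟩
        simp [hmem]
      have hcl' : ∀ z ∈ s', f z ∈ s' := by
        intro z hz
        rw [hmem] at hz ⊢
        refine ⟨hcl z hz.1, ?_, ?_⟩
        · intro h
          exact hz.2.2 (by rw [← h, hinv z hz.1])
        · intro h
          have : z = x := by
            have := congrArg f h
            rwa [hinv z hz.1, hinv x hx] at this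
          exact hz.2.1 this
      have hsplit : s = insert x (insert (f x) s') := by
        ext z
        simp only [Finset.mem_insert, hmem]
        constructor
        · intro hz
          by_cases h1 : z = x
          · tauto
          · by_cases h2 : z = f x <;> tauto
        · rintro (rfl | rfl | hz) <;> [exact hx; exact hfx; exact hz.1]
      have hx' : x ∉ insert (f x) s' := by
        simp only [Finset.mem_insert, hmem]
        push_neg
        exact ⟨fun h => hne h.symm, fun _ hne' => absurd rfl hne'⟩
      have hfx' : f x ∉ s' := by simp [hmem]
      have hEs' : Even (∑ z ∈ s', g z) :=
        ih s' hss hcl' (fun z hz => hinv z (hsub hz)) (fun z hz => hfp z (hsub hz))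
          (fun z hz => hg z (hsub hz))
      rw [hsplit, Finset.sum_insert hx', Finset.sum_insert hfx', hg x hx, ← add_assoc]
      exact Even.add (Even.add_self (g x)) hEs'

lemma card_pairs {β : Type*} [Fintype β] [DecidableEq β] (p : β → β → Prop)
    [∀ x y, Decidable (p x y)] :
    (Finset.univ.filter fun q : β × β => p q.1 q.2).card
      = ∑ x : β, (Finset.univ.filter fun y => p x y).card := by
  rw [Finset.card_eq_sum_card_fiberwise (f := Prod.fst) (t := univ) (fun q _ => mem_univ _)]
  refine Finset.sum_congr rfl fun x _ => ?_
  refine Finset.card_nbij' Prod.snd (fun y => (x, y)) ?_ ?_ ?_ ?_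
  · intro q hq
    simp only [Finset.mem_coe, Finset.mem_filter, Finset.mem_univ, true_and] at hq ⊢
    obtain ⟨h1, h2⟩ := hq
    rw [← h2]
    exact h1
  · intro y hy
    simp only [Finset.mem_coe, Finset.mem_filter, Finset.mem_univ, true_and] at hy ⊢
    exact ⟨hy, trivial⟩
  · intro q hq
    simp only [Finset.mem_coe, Finset.mem_filter] at hq
    rw [← hq.2]
  · intro y _
    rfl

/-- A `d'`-regular graph with `2d' + 2` vertices satisfying Property R* (with respect
to some involution) can exist only if `d' ≡ 0` or `3 (mod 4)`. -/
theorem stmt_13 {β : Type*} [Fintype β] (G' : SimpleGraph β) (f : β → β)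
    (hf : Function.Involutive f) (hR : PropertyRStar G' f) (d' : ℕ)
    (hreg : ∀ v : β, (G'.neighborSet v).ncard = d')
    (hcard : Fintype.card β = 2 * d' + 2) :
    d' % 4 = 0 ∨ d' % 4 = 3 := by
  classical
  -- degrees as filter cards
  have hreg' : ∀ x : β, (univ.filter fun y => G'.Adj x y).card = d' := by
    intro x
    rw [← hreg x, Set.ncard_eq_toFinset_card']
    congr 1
    ext y
    simp [SimpleGraph.mem_neighborSet]
  -- f has no fixed points
  have hfp : ∀ x : β, f x ≠ x := by
    intro x hfx
    have hsub : univ.erase x ⊆ (univ.filter fun y => G'.Adj x y) ∪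
        ((univ.filter fun y => G'.Adj x y).image f) := by
      intro y hy
      have hyx : y ≠ x := (Finset.mem_erase.mp hy).1
      rcases hR x y (Ne.symm hyx) with h | h | h
      · exact Finset.mem_union_left _ (by simp [h])
      · rw [hfx] at h
        refine Finset.mem_union_right _ ?_
        refine Finset.mem_image.mpr ⟨f y, by simp [h], hf y⟩
      · exact absurd (h.trans hfx) hyx
    have h1 : (univ.erase x).card = 2 * d' + 1 := by
      rw [Finset.card_erase_of_mem (Finset.mem_univ x), Finset.card_univ, hcard]
      omega
    have h2 := Finset.card_le_card hsub
    have h3 := Finset.card_union_le (univ.filter fun y => G'.Adj x y)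
      ((univ.filter fun y => G'.Adj x y).image f)
    have h4 := Finset.card_image_le (f := f) (s := univ.filter fun y => G'.Adj x y)
    rw [h1] at h2
    rw [hreg' x] at h3 h4
    omega
  -- key counting: no partner edges, and XOR property
  have hkey : (∀ x : β, ¬ G'.Adj x (f x)) ∧
      ∀ x y : β, x ≠ y → y ≠ f x → (G'.Adj x y ↔ ¬ G'.Adj (f x) (f y)) := by
    set T : Finset (β × β) := univ.filter (fun p => p.1 ≠ p.2 ∧ p.2 ≠ f p.1) with hT
    set E : Finset (β × β) := univ.filter (fun p => G'.Adj p.1 p.2) with hEdef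
    set S : Finset (β × β) := T.filter (fun p => ¬ G'.Adj p.1 p.2) with hS
    have hTcard : T.card = (2 * d' + 2) * (2 * d') := by
      rw [hT, card_pairs (fun x y => x ≠ y ∧ y ≠ f x)]
      have : ∀ x : β, (univ.filter fun y => x ≠ y ∧ y ≠ f x).card = 2 * d' := by
        intro x
        have he : (univ.filter fun y => x ≠ y ∧ y ≠ f x) = univ \ {x, f x} := by
          ext y
          simp only [Finset.mem_filter, Finset.mem_univ, true_and, Finset.mem_sdiff,
            Finset.mem_insert, Finset.mem_singleton, not_or]
          constructor <;> rintro ⟨h1, h2⟩ <;> exact ⟨fun h => h1 h.symm, h2⟩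
        rw [he, Finset.card_sdiff_of_subset (by simp), Finset.card_univ, hcard]
        rw [Finset.card_insert_of_notMem (by simp [Ne.symm (hfp x)]), Finset.card_singleton]
        omega
      rw [Finset.sum_congr rfl fun x _ => this x, Finset.sum_const, Finset.card_univ, hcard,
        smul_eq_mul]
    have hEcard : E.card = (2 * d' + 2) * d' := by
      rw [hEdef, card_pairs (fun x y => G'.Adj x y)]
      rw [Finset.sum_congr rfl fun x _ => hreg' x, Finset.sum_const, Finset.card_univ, hcard,
        smul_eq_mul]
    -- partner-edge count c
    set c : ℕ := (univ.filter fun x => G'.Adj x (f x)).card with hcdef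
    have hcc : (E.filter (fun p : β × β => p.2 = f p.1)).card = c := by
      rw [hcdef]
      refine Finset.card_nbij' Prod.fst (fun x => (x, f x)) ?_ ?_ ?_ ?_
      · intro p hp
        simp only [hEdef, Finset.mem_coe, Finset.mem_filter, Finset.mem_univ, true_and] at hp ⊢
        obtain ⟨h1, h2⟩ := hp
        rwa [h2] at h1
      · intro x hx
        simp only [hEdef, Finset.mem_coe, Finset.mem_filter, Finset.mem_univ, true_and] at hx ⊢
        exact ⟨hx, trivial⟩
      · intro p hp
        simp only [hEdef, Finset.mem_coe, Finset.mem_filter] at hp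
        exact Prod.ext rfl hp.2.symm
      · intro x _
        rfl
    have hcE : c ≤ E.card := by
      rw [← hcc]
      exact Finset.card_filter_le _ _
    have hTS : S.card + (E.card - c) = T.card := by
      have hsplit := Finset.card_filter_add_card_filter_not
        (s := T) (p := fun p : β × β => ¬ G'.Adj p.1 p.2)
      have hTadj : T.filter (fun p : β × β => ¬¬ G'.Adj p.1 p.2)
          = E.filter (fun p => ¬ p.2 = f p.1) := by
        ext p
        simp only [hT, hEdef, Finset.mem_filter, Finset.mem_univ, true_and, not_not]
        constructor
        · rintro ⟨⟨_, h2⟩, h3⟩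
          exact ⟨h3, h2⟩
        · rintro ⟨h1, h2⟩
          exact ⟨⟨G'.ne_of_adj h1, h2⟩, h1⟩
      have hEsplit := Finset.card_filter_add_card_filter_not
        (s := E) (p := fun p : β × β => p.2 = f p.1)
      rw [hcc] at hEsplit
      rw [hTadj, ← hS] at hsplit
      omega
    -- the map phi on S
    have hphi : (S.image (fun p : β × β => (f p.1, f p.2))) ⊆ T \ S := by
      intro q hq
      obtain ⟨p, hp, rfl⟩ := Finset.mem_image.mp hq
      simp only [hS, hT, Finset.mem_filter, Finset.mem_univ, true_and] at hp
      obtain ⟨⟨h1, h2⟩, h3⟩ := hp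
      have hadj : G'.Adj (f p.1) (f p.2) := by
        rcases hR p.1 p.2 h1 with h | h | h
        · exact absurd h h3
        · exact h
        · exact absurd h h2
      simp only [hS, hT, Finset.mem_sdiff, Finset.mem_filter, Finset.mem_univ, true_and]
      refine ⟨⟨hf.injective.ne h1, ?_⟩, ?_⟩
      · intro h
        exact h2 (by rw [← hf p.2, h, hf])
      · rintro ⟨-, hn⟩
        exact hn hadj
    have hinj : Function.Injective (fun p : β × β => (f p.1, f p.2)) := by
      intro p q h
      simp only [Prod.mk.injEq] at h
      exact Prod.ext (hf.injective h.1) (hf.injective h.2)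
    have himcard : (S.image (fun p : β × β => (f p.1, f p.2))).card = S.card :=
      Finset.card_image_of_injective _ hinj
    have hSsubT : S ⊆ T := Finset.filter_subset _ _
    have hTSdiff : (T \ S).card = T.card - S.card := Finset.card_sdiff_of_subset hSsubT
    have hineq : S.card ≤ T.card - S.card := by
      rw [← hTSdiff, ← himcard]
      exact Finset.card_le_card hphi
    have hTE : T.card = 2 * E.card := by
      rw [hTcard, hEcard]
      ring
    have hc0 : c = 0 := by omega
    -- equality of the image
    have hSc : S.card = E.card := by omega
    have himeq : S.image (fun p : β × β => (f p.1, f p.2)) = T \ S := by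
      apply Finset.eq_of_subset_of_card_le hphi
      rw [himcard, hTSdiff]
      omega
    constructor
    · intro x
      have : (univ.filter fun x => G'.Adj x (f x)) = ∅ := Finset.card_eq_zero.mp hc0
      intro h
      have : x ∈ (univ.filter fun x => G'.Adj x (f x)) := by simp [h]
      simp_all
    · intro x y hxy hyfx
      constructor
      · intro hadj
        have hmemTS : (x, y) ∈ T \ S := by
          simp only [hS, hT, Finset.mem_sdiff, Finset.mem_filter, Finset.mem_univ, true_and]
          exact ⟨⟨hxy, hyfx⟩, by rintro ⟨-, hn⟩; exact hn hadj⟩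
        rw [← himeq] at hmemTS
        obtain ⟨p, hp, heq⟩ := Finset.mem_image.mp hmemTS
        simp only [Prod.mk.injEq] at heq
        have hp1 : p.1 = f x := by rw [← hf p.1, heq.1]
        have hp2 : p.2 = f y := by rw [← hf p.2, heq.2]
        simp only [hS, Finset.mem_filter] at hp
        rw [← hp1, ← hp2]
        exact hp.2
      · intro hn
        by_contra hnadj
        rcases hR x y hxy with h | h | h
        · exact hnadj h
        · exact hn h
        · exact hyfx h
  obtain ⟨hc, hxor⟩ := hkey
  -- the pair-counting
  set A : β → Finset β := fun x => univ.filter fun y => G'.Adj x y ∧ G'.Adj x (f y) with hA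
  set B : β → Finset β := fun x => univ.filter fun y => G'.Adj x y ∧ ¬ G'.Adj x (f y) with hB
  -- the transfer lemma
  have haux : ∀ x y : β, G'.Adj x y → ¬ G'.Adj x (f y) →
      G'.Adj (f x) y ∧ ¬ G'.Adj (f x) (f y) := by
    intro x y hxy hn
    have hxny : x ≠ y := G'.ne_of_adj hxy
    have hyfx : y ≠ f x := by
      intro h
      rw [h] at hxy
      exact hc x hxy
    have hxfy : x ≠ f y := by
      intro h
      apply hyfx
      rw [h, hf]
    have hfyfx : f y ≠ f x := hf.injective.ne (Ne.symm hxny)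
    constructor
    · have hx := hxor x (f y) hxfy hfyfx
      rw [hf y] at hx
      by_contra hcon
      exact hn (hx.mpr (fun h => hcon h))
    · exact (hxor x y hxny hyfx).mp hxy
  -- P and Q
  set P : Finset (β × β) := univ.filter fun p => G'.Adj p.1 p.2 ∧ G'.Adj p.1 (f p.2) with hP
  set Q : Finset (β × β) := univ.filter fun p => G'.Adj p.1 p.2 ∧ ¬ G'.Adj p.1 (f p.2) with hQ
  have hQP : ∀ x y : β, G'.Adj x y → ¬ G'.Adj x (f y) → G'.Adj y x ∧ G'.Adj y (f x) := by
    intro x y hxy hn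
    exact ⟨hxy.symm, ((haux x y hxy hn).1).symm⟩
  have hPQ : ∀ x y : β, G'.Adj x y → G'.Adj x (f y) → G'.Adj y x ∧ ¬ G'.Adj y (f x) := by
    intro x y hxy hxfy
    refine ⟨hxy.symm, ?_⟩
    have hxny : x ≠ y := G'.ne_of_adj hxy
    have hxfy' : x ≠ f y := G'.ne_of_adj hxfy
    have hfyfx : f y ≠ f x := hf.injective.ne (Ne.symm hxny)
    have hx := hxor x (f y) hxfy' hfyfx
    rw [hf y] at hx
    intro hcon
    exact (hx.mp hxfy) hcon.symm
  have hswap : Q = P.image Prod.swap := by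
    ext p
    simp only [hP, hQ, Finset.mem_filter, Finset.mem_univ, true_and, Finset.mem_image]
    constructor
    · rintro ⟨h1, h2⟩
      refine ⟨(p.2, p.1), ?_, ?_⟩
      · simp only [Finset.mem_filter, Finset.mem_univ, true_and]
        exact hQP p.1 p.2 h1 h2
      · exact Prod.ext rfl rfl
    · rintro ⟨q, hq, rfl⟩
      exact hPQ q.1 q.2 hq.1 hq.2
  have hPQcard : P.card = Q.card := by
    rw [hswap, Finset.card_image_of_injective _ Prod.swap_injective]
  have hPunion : P.card + Q.card = (2 * d' + 2) * d' := by
    have hsplit := Finset.card_filter_add_card_filter_not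
      (s := univ.filter fun p : β × β => G'.Adj p.1 p.2)
      (p := fun p : β × β => G'.Adj p.1 (f p.2))
    have hPP : (univ.filter fun p : β × β => G'.Adj p.1 p.2).filter
        (fun p => G'.Adj p.1 (f p.2)) = P := by
      rw [hP, Finset.filter_filter]
    have hQQ : (univ.filter fun p : β × β => G'.Adj p.1 p.2).filter
        (fun p => ¬ G'.Adj p.1 (f p.2)) = Q := by
      rw [hQ, Finset.filter_filter]
    rw [hPP, hQQ] at hsplit
    rw [hsplit, card_pairs (fun x y => G'.Adj x y)]
    rw [Finset.sum_congr rfl fun x _ => hreg' x, Finset.sum_const, Finset.card_univ, hcard,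
      smul_eq_mul]
  have hPcard : P.card = (d' + 1) * d' := by
    have hlin : (2 * d' + 2) * d' = 2 * ((d' + 1) * d') := by ring
    omega
  have hPsum : ∑ x : β, (A x).card = (d' + 1) * d' := by
    rw [← hPcard, hP, hA, card_pairs (fun x y => G'.Adj x y ∧ G'.Adj x (f y))]
  -- A x even
  have hAeven : ∀ x : β, Even (A x).card := by
    intro x
    rw [Finset.card_eq_sum_ones]
    refine even_sum_invol f _ (A x) ?_ (fun y _ => hf y) (fun y _ => hfp y) (fun _ _ => rfl)
    intro y hy
    simp only [hA, Finset.mem_filter, Finset.mem_univ, true_and] at hy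
    simp only [hA, Finset.mem_filter, Finset.mem_univ, true_and, hf y]
    exact ⟨hy.2, hy.1⟩
  -- A (f x) has same card as A x
  have hABsplit : ∀ x : β, (A x).card + (B x).card = d' := by
    intro x
    rw [← hreg' x]
    have hsplit := Finset.card_filter_add_card_filter_not
      (s := univ.filter fun y => G'.Adj x y) (p := fun y => G'.Adj x (f y))
    rw [Finset.filter_filter, Finset.filter_filter] at hsplit
    rw [hA, hB]
    exact hsplit
  have hBf : ∀ x : β, B (f x) = B x := by
    have key : ∀ x : β, B x ⊆ B (f x) := by
      intro x y hy
      simp only [hB, Finset.mem_filter, Finset.mem_univ, true_and] at hy ⊢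
      have h := haux x y hy.1 hy.2
      exact h
    intro x
    apply Finset.Subset.antisymm
    · have h := key (f x)
      rwa [hf x] at h
    · exact key x
  have hAf : ∀ x : β, (A (f x)).card = (A x).card := by
    intro x
    have h1 := hABsplit x
    have h2 := hABsplit (f x)
    rw [hBf x] at h2
    omega
  -- divisibility by 4
  have h4 : 4 ∣ (d' + 1) * d' := by
    have hEg : Even (∑ x : β, (A x).card / 2) := by
      refine even_sum_invol f _ univ (fun x _ => Finset.mem_univ _) (fun x _ => hf x)
        (fun x _ => hfp x) ?_
      intro x _
      rw [hAf x]
    obtain ⟨m, hm⟩ := hEg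
    have hrw : ∑ x : β, (A x).card = (∑ x : β, (A x).card / 2) * 2 := by
      rw [Finset.sum_mul]
      refine Finset.sum_congr rfl fun x _ => ?_
      rw [Nat.div_two_mul_two_of_even (hAeven x)]
    rw [← hPsum, hrw, hm]
    exact ⟨m, by ring⟩
  -- arithmetic conclusion
  have hd : ((d' + 1) * d') % 4 = 0 := Nat.eq_zero_of_dvd_of_lt h4 |> fun _ => Nat.mod_eq_zero_of_dvd h4
  rw [Nat.mul_mod] at hd
  have e2 : (d' + 1) % 4 = (d' % 4 + 1) % 4 := by omega
  rw [e2] at hd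
  have hr : d' % 4 < 4 := by omega
  set r := d' % 4 with hrdef
  clear_value r
  interval_cases r <;> omega
end
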